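/- arXiv:2204.01473 — 4 statements merged into one kernel-verified Lean document; each statement's English description precedes it below -/
import Mathlib

section
/- Let m be a positive half-integer, s a half-integer, and j a negative integer. Then for all τ in the upper half-plane and z1, z2 ∈ ℂ (with all denominators nonzero): (i) Φ^{[m,s+j]}_1(τ,z1,z2,0) = Φ^{[m,s]}_1(τ,z1,z2,0) + Σ_{k=j}^{−1} e^{πi(s+k)(z1−z2)} q^{−(s+k)²/(4m)} θ_{s+k,m}(τ, z1+z2); (ii) Φ^{[m,s+j]}_2(τ,z1,z2,0) = Φ^{[m,s]}_2(τ,z1,z2,0) + Σ_{k=j}^{−1} e^{πi(s+k)(z1−z2)} q^{−(s+k)²/(4m)} θ_{−(s+k),m}(τ, z1+z2); (iii) Φ^{[m,s+j]}(τ,z1,z2,0) = Φ^{[m,s]}(τ,z1,z2,0) + Σ_{k=j}^{−1} e^{πi(s+k)(z1−z2)} q^{−(s+k)²/(4m)} [θ_{s+k,m} − θ_{−(s+k),m}](τ, z1+z2). -/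
open Complex

noncomputable section

namespace Wakimoto

/-- `qpow τ x = e^{2πiτx}`, i.e. `q^x` where `q = e^{2πiτ}`. -/
def qpow (τ x : ℂ) : ℂ := Complex.exp (2 * Real.pi * Complex.I * τ * x)

/-- `e2 z = e^{2πiz}`. -/
def e2 (z : ℂ) : ℂ := Complex.exp (2 * Real.pi * Complex.I * z)

/-- The mock theta function `Φ^{[m,s]}_1`. -/
def Phi1 (m s : ℂ) (τ z1 z2 t : ℂ) : ℂ :=
  Complex.exp (-(2 * Real.pi * Complex.I) * m * t) *
    ∑' j : ℤ,
      Complex.exp (2 * Real.pi * Complex.I * (m * (j : ℂ) * (z1 + z2) + s * z1)) *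
          qpow τ (m * (j : ℂ) ^ 2 + s * (j : ℂ)) /
        (1 - e2 z1 * qpow τ (j : ℂ))

/-- The mock theta function `Φ^{[m,s]}_2`. -/
def Phi2 (m s : ℂ) (τ z1 z2 t : ℂ) : ℂ :=
  Complex.exp (-(2 * Real.pi * Complex.I) * m * t) *
    ∑' j : ℤ,
      Complex.exp (-(2 * Real.pi * Complex.I) * (m * (j : ℂ) * (z1 + z2) + s * z2)) *
          qpow τ (m * (j : ℂ) ^ 2 + s * (j : ℂ)) /
        (1 - e2 (-z2) * qpow τ (j : ℂ))

/-- `Φ^{[m,s]} = Φ^{[m,s]}_1 - Φ^{[m,s]}_2`. -/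
def Phi (m s : ℂ) (τ z1 z2 t : ℂ) : ℂ :=
  Phi1 m s τ z1 z2 t - Phi2 m s τ z1 z2 t

/-- Jacobi's theta function `θ_{k,m}`. -/
def jTheta (k m : ℂ) (τ z : ℂ) : ℂ :=
  ∑' j : ℤ,
    Complex.exp (2 * Real.pi * Complex.I * (m * ((j : ℂ) + k / (2 * m)) * z)) *
      qpow τ (m * ((j : ℂ) + k / (2 * m)) ^ 2)

/-- The signed theta function `θ^{(-)}_{k,m}`. -/
def jThetaM (k m : ℂ) (τ z : ℂ) : ℂ :=
  ∑' j : ℤ,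
    (-1 : ℂ) ^ j *
      Complex.exp (2 * Real.pi * Complex.I * (m * ((j : ℂ) + k / (2 * m)) * z)) *
      qpow τ (m * ((j : ℂ) + k / (2 * m)) ^ 2)

/-- The Dedekind eta function. -/
def eta (τ : ℂ) : ℂ := qpow τ (1 / 24) * ∏' n : ℕ, (1 - qpow τ ((n : ℂ) + 1))

/-- The Mumford theta functions `ϑ_{ab}`. -/
def mumford (a b : ℕ) (τ z : ℂ) : ℂ :=
  ∑' n : ℤ,
    Complex.exp (Real.pi * Complex.I * τ * ((n : ℂ) + (a : ℂ) / 2) ^ 2 +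
      2 * Real.pi * Complex.I * ((n : ℂ) + (a : ℂ) / 2) * (z + (b : ℂ) / 2))

/-- `z` lies in the lattice `ℤ + ℤτ`. -/
def InLattice (τ z : ℂ) : Prop := ∃ a b : ℤ, z = (a : ℂ) + (b : ℂ) * τ

/-!
Write `A_j` for the numerator of the `j`-th term of `Φ^{[m,s-1]}_1` and `u_j = e^{2πiz₁}q^j`. The
numerator of the `j`-th term of `Φ^{[m,s]}_1` is `A_j u_j`, so
`Φ^{[m,s-1]}_1 - Φ^{[m,s]}_1 = Σ_j A_j (1 - u_j)/(1 - u_j) = Σ_j A_j`, and completing the square in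
`mj² + (s-1)j` turns `Σ_j A_j` into `e^{πi(s-1)(z₁-z₂)} q^{-(s-1)²/4m} θ_{s-1,m}(τ, z₁+z₂)`; all
series converge because `|u_j|` tends to `0` or `∞` as `j → ±∞`. Iterating gives (i). Since
`Φ_2(z₁, z₂) = Φ_1(-z₂, -z₁)` and `θ_{k,m}(τ, -z) = θ_{-k,m}(τ, z)`, (ii) is (i) at `(-z₂, -z₁)`,
and (iii) is the difference of the two.
-/

open Filter Topology

lemma norm_e2_mul_qpow (τ z : ℂ) (j : ℤ) :
    ‖e2 z * qpow τ j‖ = ‖e2 z‖ * Real.exp (-(2 * Real.pi * τ.im) * j) := by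
  rw [norm_mul, qpow, Complex.norm_exp]
  congr 2
  simp [Complex.mul_re, Complex.mul_im]

lemma eventually_half_le_norm_one_sub_e2_mul_qpow {τ : ℂ} (hτ : 0 < τ.im) (z : ℂ) :
    ∀ᶠ j : ℤ in cofinite, (1 / 2 : ℝ) ≤ ‖1 - e2 z * qpow τ j‖ := by
  have hb : -(2 * Real.pi * τ.im) < 0 := by nlinarith [Real.pi_pos]
  have hcastTop := tendsto_intCast_atTop_atTop (R := ℝ)
  have hcastBot : Tendsto ((↑) : ℤ → ℝ) atBot atBot :=
    tendsto_intCast_atBot_iff.2 tendsto_id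
  have hw : 0 < ‖e2 z‖ := norm_pos_iff.2 (Complex.exp_ne_zero _)
  have hTop : Tendsto (fun j : ℤ => ‖e2 z * qpow τ j‖) atTop (𝓝 0) := by
    simp only [norm_e2_mul_qpow]
    simpa using
      (Real.tendsto_exp_atBot.comp (hcastTop.const_mul_atTop_of_neg hb)).const_mul ‖e2 z‖
  have hBot : Tendsto (fun j : ℤ => ‖e2 z * qpow τ j‖) atBot atTop := by
    simp only [norm_e2_mul_qpow]
    exact (Real.tendsto_exp_atTop.comp (hcastBot.const_mul_atBot_of_neg hb)).const_mul_atTop hw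
  rw [Int.cofinite_eq, eventually_sup]
  constructor
  · filter_upwards [hBot.eventually_ge_atTop 2] with j hj
    rw [norm_sub_rev]
    linarith [norm_sub_norm_le (e2 z * qpow τ j) 1, norm_one (α := ℂ)]
  · filter_upwards [hTop.eventually (gt_mem_nhds one_half_pos)] with j hj
    linarith [norm_sub_norm_le 1 (e2 z * qpow τ j), norm_one (α := ℂ)]

lemma summable_div_of_eventually_le_norm {ι 𝕜 : Type*} [RCLike 𝕜] {f d : ι → 𝕜}
    (hf : Summable f) {δ : ℝ} (hδ : 0 < δ) (hd : ∀ᶠ j in cofinite, δ ≤ ‖d j‖) :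
    Summable fun j => f j / d j := by
  refine Summable.of_norm_bounded_eventually (hf.norm.mul_left δ⁻¹) ?_
  filter_upwards [hd] with j hj
  rw [norm_div, div_eq_mul_inv, mul_comm]
  gcongr

lemma one_sub_e2_mul_qpow_ne_zero {τ z : ℂ} (hz : ¬ InLattice τ z) (j : ℤ) :
    1 - e2 z * qpow τ j ≠ 0 := by
  rw [sub_ne_zero, ne_comm, e2, qpow, ← Complex.exp_add, Ne, Complex.exp_eq_one_iff]
  rintro ⟨n, hn⟩
  refine hz ⟨n, -j, ?_⟩
  have hπ : 2 * (Real.pi : ℂ) * Complex.I ≠ 0 := by simp [Real.pi_ne_zero]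
  push_cast
  apply mul_left_cancel₀ hπ
  linear_combination hn

def phi1Num (m s τ z1 z2 : ℂ) (j : ℤ) : ℂ :=
  Complex.exp (2 * Real.pi * Complex.I * (m * (j : ℂ) * (z1 + z2) + s * z1)) *
    qpow τ (m * (j : ℂ) ^ 2 + s * (j : ℂ))

lemma Phi1_zero_eq_tsum (m s τ z1 z2 : ℂ) :
    Phi1 m s τ z1 z2 0 = ∑' j : ℤ, phi1Num m s τ z1 z2 j / (1 - e2 z1 * qpow τ j) := by
  simp [Phi1, phi1Num]

lemma phi1Num_eq_jacobiTheta₂_term (m s τ z1 z2 : ℂ) (j : ℤ) :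
    phi1Num m s τ z1 z2 j = Complex.exp (2 * Real.pi * Complex.I * s * z1) *
      jacobiTheta₂_term j (m * (z1 + z2) + s * τ) (2 * m * τ) := by
  rw [phi1Num, jacobiTheta₂_term, qpow, ← Complex.exp_add, ← Complex.exp_add]
  ring_nf

lemma summable_phi1Num {m τ : ℂ} (hmτ : 0 < (m * τ).im) (s z1 z2 : ℂ) :
    Summable (phi1Num m s τ z1 z2) := by
  rw [show phi1Num m s τ z1 z2 = _ from funext (phi1Num_eq_jacobiTheta₂_term m s τ z1 z2)]
  refine ((summable_jacobiTheta₂_term_iff _ _).2 ?_).mul_left _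
  rw [mul_assoc, show (2 : ℂ) = (2 : ℝ) by norm_num, Complex.im_ofReal_mul]
  positivity

lemma phi1Num_sub_one_mul (m s τ z1 z2 : ℂ) (j : ℤ) :
    phi1Num m (s - 1) τ z1 z2 j * (e2 z1 * qpow τ j) = phi1Num m s τ z1 z2 j := by
  simp only [phi1Num, e2, qpow, ← Complex.exp_add]
  ring_nf

lemma phi1Num_eq_theta_term {m : ℂ} (hm : m ≠ 0) (c τ z1 z2 : ℂ) (j : ℤ) :
    phi1Num m c τ z1 z2 j =
      Complex.exp (Real.pi * Complex.I * c * (z1 - z2)) * qpow τ (-(c ^ 2) / (4 * m)) *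
        (Complex.exp (2 * Real.pi * Complex.I * (m * ((j : ℂ) + c / (2 * m)) * (z1 + z2))) *
          qpow τ (m * ((j : ℂ) + c / (2 * m)) ^ 2)) := by
  simp only [phi1Num, qpow, ← Complex.exp_add]
  congr 1
  field_simp
  ring

lemma tsum_phi1Num {m : ℂ} (hm : m ≠ 0) (c τ z1 z2 : ℂ) :
    ∑' j : ℤ, phi1Num m c τ z1 z2 j =
      Complex.exp (Real.pi * Complex.I * c * (z1 - z2)) * qpow τ (-(c ^ 2) / (4 * m)) *
        jTheta c m τ (z1 + z2) := by
  simp_rw [phi1Num_eq_theta_term hm, tsum_mul_left, jTheta]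

lemma Phi1_sub_one {m τ z1 z2 : ℂ} (hτ : 0 < τ.im) (hmτ : 0 < (m * τ).im)
    (hz1 : ¬ InLattice τ z1) (c : ℂ) :
    Phi1 m (c - 1) τ z1 z2 0 = Phi1 m c τ z1 z2 0 +
      Complex.exp (Real.pi * Complex.I * (c - 1) * (z1 - z2)) *
        qpow τ (-((c - 1) ^ 2) / (4 * m)) * jTheta (c - 1) m τ (z1 + z2) := by
  have hm : m ≠ 0 := by
    rintro rfl
    simp at hmτ
  have hsplit (j : ℤ) : phi1Num m (c - 1) τ z1 z2 j / (1 - e2 z1 * qpow τ j) =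
      phi1Num m c τ z1 z2 j / (1 - e2 z1 * qpow τ j) + phi1Num m (c - 1) τ z1 z2 j := by
    rw [← phi1Num_sub_one_mul m c]
    field_simp [one_sub_e2_mul_qpow_ne_zero hz1 j]
    ring
  rw [Phi1_zero_eq_tsum, Phi1_zero_eq_tsum, ← tsum_phi1Num hm, tsum_congr hsplit,
    Summable.tsum_add _ (summable_phi1Num hmτ _ _ _)]
  exact summable_div_of_eventually_le_norm (summable_phi1Num hmτ _ _ _) one_half_pos
    (eventually_half_le_norm_one_sub_e2_mul_qpow hτ z1)

lemma eq_add_sum_Icc_of_forall_sub_one {M : Type*} [AddCommMonoid M] {f g : ℤ → M}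
    (h : ∀ k, f (k - 1) = f k + g (k - 1)) {j : ℤ} (hj : j ≤ 0) :
    f j = f 0 + ∑ k ∈ Finset.Icc j (-1), g k := by
  induction j, hj using Int.leInductionDown with
  | base => simp
  | pred n hn ih =>
    rw [h, ih, ← Finset.insert_Icc_left_eq_Icc_sub_one (by omega),
      Finset.sum_insert (by simp), add_assoc, add_comm (g _)]

lemma Phi1_add_intCast {m τ z1 z2 : ℂ} (hτ : 0 < τ.im) (hmτ : 0 < (m * τ).im)
    (hz1 : ¬ InLattice τ z1) (s : ℂ) {j : ℤ} (hj : j ≤ 0) :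
    Phi1 m (s + j) τ z1 z2 0 = Phi1 m s τ z1 z2 0 +
      ∑ k ∈ Finset.Icc j (-1),
        Complex.exp (Real.pi * Complex.I * (s + k) * (z1 - z2)) *
          qpow τ (-((s + k) ^ 2) / (4 * m)) * jTheta (s + k) m τ (z1 + z2) := by
  simpa using eq_add_sum_Icc_of_forall_sub_one (f := fun k : ℤ => Phi1 m (s + k) τ z1 z2 0)
    (fun k => by simpa [add_sub_assoc] using Phi1_sub_one hτ hmτ hz1 (z2 := z2) (s + k)) hj

lemma Phi2_eq_Phi1 (m s τ z1 z2 t : ℂ) : Phi2 m s τ z1 z2 t = Phi1 m s τ (-z2) (-z1) t := by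
  simp only [Phi1, Phi2]
  congr 2 with j
  congr 2
  ring_nf

lemma jTheta_neg (k m τ z : ℂ) : jTheta k m τ (-z) = jTheta (-k) m τ z := by
  rw [jTheta, jTheta, ← (Equiv.neg ℤ).tsum_eq]
  congr 1 with j
  simp only [Equiv.neg_apply, Int.cast_neg]
  ring_nf

lemma not_inLattice_neg {τ z : ℂ} (hz : ¬ InLattice τ z) : ¬ InLattice τ (-z) := by
  rintro ⟨a, b, h⟩
  exact hz ⟨-a, -b, by push_cast; linear_combination -h⟩

lemma Phi2_add_intCast {m τ z1 z2 : ℂ} (hτ : 0 < τ.im) (hmτ : 0 < (m * τ).im)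
    (hz2 : ¬ InLattice τ z2) (s : ℂ) {j : ℤ} (hj : j ≤ 0) :
    Phi2 m (s + j) τ z1 z2 0 = Phi2 m s τ z1 z2 0 +
      ∑ k ∈ Finset.Icc j (-1),
        Complex.exp (Real.pi * Complex.I * (s + k) * (z1 - z2)) *
          qpow τ (-((s + k) ^ 2) / (4 * m)) * jTheta (-(s + k)) m τ (z1 + z2) := by
  simp only [Phi2_eq_Phi1, Phi1_add_intCast hτ hmτ (not_inLattice_neg hz2) s hj, neg_sub_neg,
    ← neg_add, jTheta_neg, add_comm z2 z1]

theorem statement0_general (m s : ℝ) (hm : ∃ n : ℕ, 0 < n ∧ m = n / 2)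
    (j : ℤ) (hj : j < 0)
    (τ : ℂ) (hτ : 0 < τ.im) (z1 z2 : ℂ)
    (hz1 : ¬ InLattice τ z1) (hz2 : ¬ InLattice τ z2) :
    (Phi1 (m : ℂ) ((s : ℂ) + (j : ℂ)) τ z1 z2 0 =
      Phi1 (m : ℂ) (s : ℂ) τ z1 z2 0 +
        ∑ k ∈ Finset.Icc j (-1),
          Complex.exp (Real.pi * Complex.I * ((s : ℂ) + (k : ℂ)) * (z1 - z2)) *
            qpow τ (-(((s : ℂ) + (k : ℂ)) ^ 2) / (4 * (m : ℂ))) *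
            jTheta ((s : ℂ) + (k : ℂ)) (m : ℂ) τ (z1 + z2)) ∧
    (Phi2 (m : ℂ) ((s : ℂ) + (j : ℂ)) τ z1 z2 0 =
      Phi2 (m : ℂ) (s : ℂ) τ z1 z2 0 +
        ∑ k ∈ Finset.Icc j (-1),
          Complex.exp (Real.pi * Complex.I * ((s : ℂ) + (k : ℂ)) * (z1 - z2)) *
            qpow τ (-(((s : ℂ) + (k : ℂ)) ^ 2) / (4 * (m : ℂ))) *
            jTheta (-((s : ℂ) + (k : ℂ))) (m : ℂ) τ (z1 + z2)) ∧
    (Phi (m : ℂ) ((s : ℂ) + (j : ℂ)) τ z1 z2 0 =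
      Phi (m : ℂ) (s : ℂ) τ z1 z2 0 +
        ∑ k ∈ Finset.Icc j (-1),
          Complex.exp (Real.pi * Complex.I * ((s : ℂ) + (k : ℂ)) * (z1 - z2)) *
            qpow τ (-(((s : ℂ) + (k : ℂ)) ^ 2) / (4 * (m : ℂ))) *
            (jTheta ((s : ℂ) + (k : ℂ)) (m : ℂ) τ (z1 + z2) -
              jTheta (-((s : ℂ) + (k : ℂ))) (m : ℂ) τ (z1 + z2))) := by
  obtain ⟨n, hn, rfl⟩ := hm
  have hmτ : 0 < ((((n : ℝ) / 2 : ℝ) : ℂ) * τ).im := by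
    rw [Complex.im_ofReal_mul]
    positivity
  have h1 := Phi1_add_intCast hτ hmτ hz1 (z2 := z2) s hj.le
  have h2 := Phi2_add_intCast hτ hmτ hz2 (z1 := z1) s hj.le
  refine ⟨h1, h2, ?_⟩
  simp only [Phi, h1, h2, mul_sub, Finset.sum_sub_distrib]
  ring

theorem statement0 (m s : ℝ) (hm : ∃ n : ℕ, 0 < n ∧ m = n / 2)
    (hs : ∃ a : ℤ, s = a / 2) (j : ℤ) (hj : j < 0)
    (τ : ℂ) (hτ : 0 < τ.im) (z1 z2 : ℂ)
    (hz1 : ¬ InLattice τ z1) (hz2 : ¬ InLattice τ z2) :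
    (Phi1 (m : ℂ) ((s : ℂ) + (j : ℂ)) τ z1 z2 0 =
      Phi1 (m : ℂ) (s : ℂ) τ z1 z2 0 +
        ∑ k ∈ Finset.Icc j (-1),
          Complex.exp (Real.pi * Complex.I * ((s : ℂ) + (k : ℂ)) * (z1 - z2)) *
            qpow τ (-(((s : ℂ) + (k : ℂ)) ^ 2) / (4 * (m : ℂ))) *
            jTheta ((s : ℂ) + (k : ℂ)) (m : ℂ) τ (z1 + z2)) ∧
    (Phi2 (m : ℂ) ((s : ℂ) + (j : ℂ)) τ z1 z2 0 =
      Phi2 (m : ℂ) (s : ℂ) τ z1 z2 0 +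
        ∑ k ∈ Finset.Icc j (-1),
          Complex.exp (Real.pi * Complex.I * ((s : ℂ) + (k : ℂ)) * (z1 - z2)) *
            qpow τ (-(((s : ℂ) + (k : ℂ)) ^ 2) / (4 * (m : ℂ))) *
            jTheta (-((s : ℂ) + (k : ℂ))) (m : ℂ) τ (z1 + z2)) ∧
    (Phi (m : ℂ) ((s : ℂ) + (j : ℂ)) τ z1 z2 0 =
      Phi (m : ℂ) (s : ℂ) τ z1 z2 0 +
        ∑ k ∈ Finset.Icc j (-1),
          Complex.exp (Real.pi * Complex.I * ((s : ℂ) + (k : ℂ)) * (z1 - z2)) *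
            qpow τ (-(((s : ℂ) + (k : ℂ)) ^ 2) / (4 * (m : ℂ))) *
            (jTheta ((s : ℂ) + (k : ℂ)) (m : ℂ) τ (z1 + z2) -
              jTheta (-((s : ℂ) + (k : ℂ))) (m : ℂ) τ (z1 + z2))) :=
  statement0_general m s hm j hj τ hτ z1 z2 hz1 hz2

end Wakimoto
end
end

section
/- Let m be a positive half-integer, s a half-integer, p an integer, and i ∈ {1,2}. Then for all τ in the upper half-plane and z1, z2, t ∈ ℂ (with all denominators nonzero): Φ^{[m,s]}_i(τ, z1, z2+pτ, t) = e^{−2πimp(z1+z2)} Φ^{[m,s]}_i(τ, z1−pτ, z2, t). -/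
/-!
Both identities come from reindexing the defining series, `j ↦ j + p` for `Φ₁` and `j ↦ j - p`
for `Φ₂`: the shift by `pτ` in the denominator is exactly the shift `q^j ↦ q^{j ± p}`, and the
numerators of corresponding terms differ by the constant factor `e^{-2πi m p (z₁ + z₂)}`.
-/

open Complex

noncomputable section

namespace Wakimoto

theorem tsum_eq_mul_tsum_of_eq_mul_comp {ι α : Type*} [DivisionSemiring α] [TopologicalSpace α]
    [IsTopologicalSemiring α] [T2Space α] (e : ι ≃ ι) (c : α) {f g : ι → α}
    (h : ∀ j, f j = c * g (e j)) : ∑' j, f j = c * ∑' j, g j := by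
  rw [← e.tsum_eq g, ← tsum_mul_left]
  exact tsum_congr h

theorem e2_mul_qpow (z τ x : ℂ) : e2 z * qpow τ x = e2 (z + τ * x) := by
  rw [e2, qpow, e2, ← Complex.exp_add]
  ring_nf

theorem Phi1_quasiperiodic (m s τ z1 z2 t : ℂ) (p : ℤ) :
    Phi1 m s τ z1 (z2 + p * τ) t =
      Complex.exp (-(2 * Real.pi * Complex.I) * m * p * (z1 + z2)) *
        Phi1 m s τ (z1 - p * τ) z2 t := by
  unfold Phi1
  conv_rhs => rw [mul_left_comm]
  congr 1
  refine tsum_eq_mul_tsum_of_eq_mul_comp (Equiv.addRight p) _ fun j => ?_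
  have hden : 1 - e2 (z1 - p * τ) * qpow τ ((j + p : ℤ) : ℂ) = 1 - e2 z1 * qpow τ j := by
    rw [e2_mul_qpow, e2_mul_qpow]
    push_cast
    ring_nf
  rw [Equiv.coe_addRight, hden, mul_div_assoc']
  congr 1
  simp only [qpow, ← Complex.exp_add]
  push_cast
  ring_nf

theorem Phi2_quasiperiodic (m s τ z1 z2 t : ℂ) (p : ℤ) :
    Phi2 m s τ z1 (z2 + p * τ) t =
      Complex.exp (-(2 * Real.pi * Complex.I) * m * p * (z1 + z2)) *
        Phi2 m s τ (z1 - p * τ) z2 t := by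
  unfold Phi2
  conv_rhs => rw [mul_left_comm]
  congr 1
  refine tsum_eq_mul_tsum_of_eq_mul_comp (Equiv.subRight p) _ fun j => ?_
  have hden : 1 - e2 (-z2) * qpow τ ((j - p : ℤ) : ℂ) = 1 - e2 (-(z2 + p * τ)) * qpow τ j := by
    rw [e2_mul_qpow, e2_mul_qpow]
    push_cast
    ring_nf
  rw [Equiv.subRight_apply, hden, mul_div_assoc']
  congr 1
  simp only [qpow, ← Complex.exp_add]
  push_cast
  ring_nf

theorem statement5_general (m s : ℝ) (p : ℤ) (i : ℕ) (hi : i = 1 ∨ i = 2)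
    (τ : ℂ) (z1 z2 t : ℂ) :
    (if i = 1 then Phi1 (m : ℂ) (s : ℂ) else Phi2 (m : ℂ) (s : ℂ))
        τ z1 (z2 + (p : ℂ) * τ) t =
      Complex.exp (-(2 * Real.pi * Complex.I) * (m : ℂ) * (p : ℂ) * (z1 + z2)) *
        (if i = 1 then Phi1 (m : ℂ) (s : ℂ) else Phi2 (m : ℂ) (s : ℂ))
          τ (z1 - (p : ℂ) * τ) z2 t := by
  rcases hi with rfl | rfl
  · exact Phi1_quasiperiodic m s τ z1 z2 t p
  · exact Phi2_quasiperiodic m s τ z1 z2 t p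

theorem statement5 (m s : ℝ) (hm : ∃ n : ℕ, 0 < n ∧ m = n / 2)
    (hs : ∃ a : ℤ, s = a / 2) (p : ℤ) (i : ℕ) (hi : i = 1 ∨ i = 2)
    (τ : ℂ) (hτ : 0 < τ.im) (z1 z2 t : ℂ)
    (hz1 : ¬ InLattice τ z1) (hz2 : ¬ InLattice τ z2) :
    (if i = 1 then Phi1 (m : ℂ) (s : ℂ) else Phi2 (m : ℂ) (s : ℂ))
        τ z1 (z2 + (p : ℂ) * τ) t =
      Complex.exp (-(2 * Real.pi * Complex.I) * (m : ℂ) * (p : ℂ) * (z1 + z2)) *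
        (if i = 1 then Phi1 (m : ℂ) (s : ℂ) else Phi2 (m : ℂ) (s : ℂ))
          τ (z1 - (p : ℂ) * τ) z2 t :=
  statement5_general m s p i hi τ z1 z2 t

end Wakimoto
end
end

section
/- Let m be a positive half-integer, s a half-integer, p an integer, and let i, j ∈ {1,2} with i ≠ j. Then for all τ in the upper half-plane and z1, z2, t ∈ ℂ (with all denominators nonzero): Φ^{[m,s]}_i(τ, z1, z2+pτ, t) = e^{−2πimp(z1+z2)} Φ^{[m,s]}_j(τ, −z2, −z1+pτ, t). -/
open Complex

noncomputable section

namespace Wakimoto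

/-!
Shifting `z2` by `pτ` and reindexing the summation variable by `p` turns the series of `Φ_1`
termwise into that of `Φ_2` at `(-z2, -z1 + pτ)` times the factor `e^{-2πimp(z1+z2)}`, and
vice versa.
-/

theorem Phi1_add_int_mul_right (m s : ℂ) (p : ℤ) (τ z1 z2 t : ℂ) :
    Phi1 m s τ z1 (z2 + p * τ) t =
      exp (-(2 * Real.pi * I) * m * p * (z1 + z2)) * Phi2 m s τ (-z2) (-z1 + p * τ) t := by
  rw [Phi1, Phi2, mul_left_comm]
  congr 1
  rw [← tsum_mul_left, ← (Equiv.subRight p).tsum_eq]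
  refine tsum_congr fun j => ?_
  simp only [Equiv.subRight_apply, qpow, e2, mul_div_assoc', ← exp_add]
  push_cast
  exact congr_arg₂ (fun a c => exp a / (1 - exp c)) (by ring) (by ring)

theorem Phi2_add_int_mul_right (m s : ℂ) (p : ℤ) (τ z1 z2 t : ℂ) :
    Phi2 m s τ z1 (z2 + p * τ) t =
      exp (-(2 * Real.pi * I) * m * p * (z1 + z2)) * Phi1 m s τ (-z2) (-z1 + p * τ) t := by
  rw [Phi1, Phi2, mul_left_comm]
  congr 1
  rw [← tsum_mul_left, ← (Equiv.addRight p).tsum_eq]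
  refine tsum_congr fun j => ?_
  simp only [Equiv.coe_addRight, qpow, e2, mul_div_assoc', ← exp_add]
  push_cast
  exact congr_arg₂ (fun a c => exp a / (1 - exp c)) (by ring) (by ring)

theorem statement6_general (m s : ℝ) (p : ℤ) (i j : ℕ)
    (hi : i = 1 ∨ i = 2) (hj : j = 1 ∨ j = 2) (hij : i ≠ j)
    (τ : ℂ) (z1 z2 t : ℂ) :
    (if i = 1 then Phi1 (m : ℂ) (s : ℂ) else Phi2 (m : ℂ) (s : ℂ))
        τ z1 (z2 + (p : ℂ) * τ) t =
      Complex.exp (-(2 * Real.pi * Complex.I) * (m : ℂ) * (p : ℂ) * (z1 + z2)) *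
        (if j = 1 then Phi1 (m : ℂ) (s : ℂ) else Phi2 (m : ℂ) (s : ℂ))
          τ (-z2) (-z1 + (p : ℂ) * τ) t := by
  rcases hi with rfl | rfl <;> rcases hj with rfl | rfl
  · exact absurd rfl hij
  · exact Phi1_add_int_mul_right m s p τ z1 z2 t
  · exact Phi2_add_int_mul_right m s p τ z1 z2 t
  · exact absurd rfl hij

theorem statement6 (m s : ℝ) (hm : ∃ n : ℕ, 0 < n ∧ m = n / 2)
    (hs : ∃ a : ℤ, s = a / 2) (p : ℤ) (i j : ℕ)
    (hi : i = 1 ∨ i = 2) (hj : j = 1 ∨ j = 2) (hij : i ≠ j)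
    (τ : ℂ) (hτ : 0 < τ.im) (z1 z2 t : ℂ)
    (hz1 : ¬ InLattice τ z1) (hz2 : ¬ InLattice τ z2) :
    (if i = 1 then Phi1 (m : ℂ) (s : ℂ) else Phi2 (m : ℂ) (s : ℂ))
        τ z1 (z2 + (p : ℂ) * τ) t =
      Complex.exp (-(2 * Real.pi * Complex.I) * (m : ℂ) * (p : ℂ) * (z1 + z2)) *
        (if j = 1 then Phi1 (m : ℂ) (s : ℂ) else Phi2 (m : ℂ) (s : ℂ))
          τ (-z2) (-z1 + (p : ℂ) * τ) t :=
  statement6_general m s p i j hi hj hij τ z1 z2 t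

end Wakimoto
end
end

section
/- Let m be a positive half-integer, s a half-integer, and p an integer. Then for all τ in the upper half-plane and z1, z2, t ∈ ℂ (with all denominators nonzero): Φ^{[m,s]}_i(τ, z1, z2+pτ, t) = e^{−2πimpz1} Φ^{[m,s+mp]}_i(τ, z1, z2, t) for i = 1, 2, and consequently Φ^{[m,s]}(τ, z1, z2+pτ, t) = e^{−2πimpz1} Φ^{[m,s+mp]}(τ, z1, z2, t). -/
open Complex

noncomputable section

namespace Wakimoto

theorem Phi1_add_int_mul_tau (m s τ z1 z2 t : ℂ) (p : ℤ) :
    Phi1 m s τ z1 (z2 + p * τ) t =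
      Complex.exp (-(2 * Real.pi * Complex.I) * m * p * z1) * Phi1 m (s + m * p) τ z1 z2 t := by
  unfold Phi1
  rw [mul_left_comm]
  congr 1
  rw [← tsum_mul_left]
  refine tsum_congr fun j => ?_
  unfold qpow e2
  simp only [← mul_div_assoc, ← Complex.exp_add]
  congr 2
  ring

/-- The shift `z2 ↦ z2 + pτ` moves the pole `e^{-2πi z2} q^j = 1` from index `j` to `j + p`, so
the sums match after reindexing `j ↦ j + p`. -/
theorem Phi2_add_int_mul_tau (m s τ z1 z2 t : ℂ) (p : ℤ) :
    Phi2 m s τ z1 (z2 + p * τ) t =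
      Complex.exp (-(2 * Real.pi * Complex.I) * m * p * z1) * Phi2 m (s + m * p) τ z1 z2 t := by
  unfold Phi2
  rw [mul_left_comm]
  congr 1
  rw [← tsum_mul_left]
  refine ((Equiv.addRight p).tsum_eq _).symm.trans (tsum_congr fun j => ?_)
  unfold qpow e2
  simp only [Equiv.coe_addRight, Int.cast_add, ← mul_div_assoc, ← Complex.exp_add]
  congr 2
  · ring
  · congr 1
    ring

theorem Phi_add_int_mul_tau (m s τ z1 z2 t : ℂ) (p : ℤ) :
    Phi m s τ z1 (z2 + p * τ) t =
      Complex.exp (-(2 * Real.pi * Complex.I) * m * p * z1) * Phi m (s + m * p) τ z1 z2 t := by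
  rw [Phi, Phi, Phi1_add_int_mul_tau, Phi2_add_int_mul_tau, mul_sub]

theorem statement7_general (m s : ℝ) (p : ℤ)
    (τ : ℂ) (z1 z2 t : ℂ) :
    (Phi1 (m : ℂ) (s : ℂ) τ z1 (z2 + (p : ℂ) * τ) t =
      Complex.exp (-(2 * Real.pi * Complex.I) * (m : ℂ) * (p : ℂ) * z1) *
        Phi1 (m : ℂ) ((s : ℂ) + (m : ℂ) * (p : ℂ)) τ z1 z2 t) ∧
    (Phi2 (m : ℂ) (s : ℂ) τ z1 (z2 + (p : ℂ) * τ) t =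
      Complex.exp (-(2 * Real.pi * Complex.I) * (m : ℂ) * (p : ℂ) * z1) *
        Phi2 (m : ℂ) ((s : ℂ) + (m : ℂ) * (p : ℂ)) τ z1 z2 t) ∧
    (Phi (m : ℂ) (s : ℂ) τ z1 (z2 + (p : ℂ) * τ) t =
      Complex.exp (-(2 * Real.pi * Complex.I) * (m : ℂ) * (p : ℂ) * z1) *
        Phi (m : ℂ) ((s : ℂ) + (m : ℂ) * (p : ℂ)) τ z1 z2 t) :=
  ⟨Phi1_add_int_mul_tau .., Phi2_add_int_mul_tau .., Phi_add_int_mul_tau ..⟩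

theorem statement7 (m s : ℝ) (hm : ∃ n : ℕ, 0 < n ∧ m = n / 2)
    (hs : ∃ a : ℤ, s = a / 2) (p : ℤ)
    (τ : ℂ) (hτ : 0 < τ.im) (z1 z2 t : ℂ)
    (hz1 : ¬ InLattice τ z1) (hz2 : ¬ InLattice τ z2) :
    (Phi1 (m : ℂ) (s : ℂ) τ z1 (z2 + (p : ℂ) * τ) t =
      Complex.exp (-(2 * Real.pi * Complex.I) * (m : ℂ) * (p : ℂ) * z1) *
        Phi1 (m : ℂ) ((s : ℂ) + (m : ℂ) * (p : ℂ)) τ z1 z2 t) ∧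
    (Phi2 (m : ℂ) (s : ℂ) τ z1 (z2 + (p : ℂ) * τ) t =
      Complex.exp (-(2 * Real.pi * Complex.I) * (m : ℂ) * (p : ℂ) * z1) *
        Phi2 (m : ℂ) ((s : ℂ) + (m : ℂ) * (p : ℂ)) τ z1 z2 t) ∧
    (Phi (m : ℂ) (s : ℂ) τ z1 (z2 + (p : ℂ) * τ) t =
      Complex.exp (-(2 * Real.pi * Complex.I) * (m : ℂ) * (p : ℂ) * z1) *
        Phi (m : ℂ) ((s : ℂ) + (m : ℂ) * (p : ℂ)) τ z1 z2 t) :=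
  statement7_general m s p τ z1 z2 t

end Wakimoto
end
end
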